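/- For λ ∈ (0,1) and 0 < Re(z) < 1/λ, 1/Γ_λ(z) = λ^z z (1/λ − z) Γ(1/λ) · ∏_{n=1}^∞ [ (1 + 1/n)^{-1/λ} (1 + z/n)(1 + (1/λ − z)/n) ], where the infinite product converges. -/

import Mathlib

open MeasureTheory Complex Filter

/-- Degenerate gamma function via the gamma-quotient formula. -/
noncomputable def degGamma (l : ℝ) (s : ℂ) : ℂ :=
  (l : ℂ) ^ (-s) * Complex.Gamma s * Complex.Gamma (1 / l - s) / Complex.Gamma (1 / l)

/-!
Inverting Gauss's limit `Γ(s) = lim n^s n! / (s (s+1) ⋯ (s+n))` gives the Weierstrass product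
`1/Γ(s) = lim s (N+1)^(-s) ∏_{n<N} (1 + s/(n+1))` for every `s ∈ ℂ`. The factors
`(1 + 1/n)^(-1/λ)` telescope to `(N+1)^(-1/λ) = (N+1)^(-z) (N+1)^(-(1/λ - z))`, so the partial
products in the theorem are `λ^z Γ(1/λ)` times the partial products for `1/Γ(z)` and
`1/Γ(1/λ - z)`.
-/

namespace Complex

open Finset Nat Topology

lemma prod_one_add_div_mul_factorial (s : ℂ) (N : ℕ) :
    (∏ n ∈ range N, (1 + s / ((n : ℂ) + 1))) * N ! = ∏ n ∈ range N, (s + ((n : ℂ) + 1)) := by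
  rw [← prod_range_add_one_eq_factorial, Nat.cast_prod, ← prod_mul_distrib]
  refine prod_congr rfl fun n _ => ?_
  have : (n : ℂ) + 1 ≠ 0 := Nat.cast_add_one_ne_zero n
  push_cast
  field_simp
  ring

lemma prod_one_add_inv_cpow (a : ℂ) (N : ℕ) :
    ∏ n ∈ range N, (1 + 1 / ((n : ℂ) + 1)) ^ a = ((N : ℂ) + 1) ^ a := by
  induction N with
  | zero => simp
  | succ N ih =>
    have hN : (N : ℝ) + 1 ≠ 0 := Nat.cast_add_one_ne_zero N
    rw [prod_range_succ, ih]
    have key : ((N + 1 : ℝ) : ℂ) * ((1 + 1 / (N + 1) : ℝ) : ℂ) = ((N + 1 : ℕ) : ℂ) + 1 := by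
      rw [← ofReal_mul, mul_one_add, mul_one_div_cancel hN]
      push_cast
      ring
    rw [← key, mul_cpow_ofReal_nonneg (by positivity) (by positivity)]
    push_cast
    rfl

noncomputable def invGammaSeq (s : ℂ) (N : ℕ) : ℂ :=
  s * ((N : ℂ) + 1) ^ (-s) * ∏ n ∈ range N, (1 + s / ((n : ℂ) + 1))

lemma inv_GammaSeq_add_one (s : ℂ) (N : ℕ) :
    (GammaSeq s (N + 1))⁻¹ = invGammaSeq s N * (1 + s / ((N : ℂ) + 1)) := by
  have hfac : ((N + 1) ! : ℂ) ≠ 0 := Nat.cast_ne_zero.mpr (Nat.factorial_ne_zero _)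
  have hprod : ∏ j ∈ range (N + 1 + 1), (s + j) =
      s * ((∏ n ∈ range (N + 1), (1 + s / ((n : ℂ) + 1))) * (N + 1)!) := by
    rw [prod_one_add_div_mul_factorial, prod_range_succ']
    push_cast
    ring
  rw [GammaSeq, inv_div, hprod, invGammaSeq, mul_assoc, ← prod_range_succ, cpow_neg]
  push_cast
  field_simp

lemma tendsto_inv_GammaSeq (s : ℂ) :
    Tendsto (fun n => (GammaSeq s n)⁻¹) atTop (𝓝 (Gamma s)⁻¹) := by
  by_cases hs : Gamma s = 0
  · -- At a pole `-m`, `Gamma` is `0` by convention and `GammaSeq s n = 0` for `n ≥ m`.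
    obtain ⟨m, rfl⟩ := (Gamma_eq_zero_iff s).mp hs
    rw [hs, inv_zero]
    refine tendsto_const_nhds.congr' ?_
    filter_upwards [eventually_ge_atTop m] with n hn
    rw [GammaSeq, prod_eq_zero (mem_range.mpr (Nat.lt_succ_of_le hn)) (neg_add_cancel _),
      div_zero, inv_zero]
  · exact (GammaSeq_tendsto_Gamma s).inv₀ hs

theorem tendsto_invGammaSeq (s : ℂ) : Tendsto (invGammaSeq s) atTop (𝓝 (Gamma s)⁻¹) := by
  have hcorr : Tendsto (fun N : ℕ => 1 + s / ((N : ℂ) + 1)) atTop (𝓝 1) := by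
    simpa using tendsto_const_nhds.add
      ((tendsto_const_div_atTop_nhds_zero_nat s).comp (tendsto_add_atTop_nat 1))
  have h := ((tendsto_inv_GammaSeq s).comp (tendsto_add_atTop_nat 1)).div hcorr one_ne_zero
  rw [div_one] at h
  refine h.congr' ?_
  filter_upwards [hcorr.eventually_ne one_ne_zero] with N hN
  simp only [Pi.div_apply, Function.comp_apply, inv_GammaSeq_add_one, mul_div_cancel_right₀ _ hN]

end Complex

theorem degGamma_weierstrass'_general (l : ℝ)
    (z : ℂ) :
    Tendsto (fun N : ℕ =>
        (l : ℂ) ^ z * z * ((1 / l : ℂ) - z) * Complex.Gamma (1 / l) *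
          ∏ n ∈ Finset.range N,
            (1 + 1 / ((n : ℂ) + 1)) ^ (-(1 / l : ℂ)) * (1 + z / (n + 1)) *
              (1 + ((1 / l : ℂ) - z) / (n + 1)))
      atTop (nhds (1 / degGamma l z)) := by
  set w : ℂ := 1 / (l : ℂ) - z
  have hsplit : ∀ N : ℕ, (l : ℂ) ^ z * z * w * Gamma (1 / l) *
      ∏ n ∈ Finset.range N,
        (1 + 1 / ((n : ℂ) + 1)) ^ (-(1 / l : ℂ)) * (1 + z / (n + 1)) * (1 + w / (n + 1)) =
      (l : ℂ) ^ z * Gamma (1 / l) * invGammaSeq z N * invGammaSeq w N := by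
    intro N
    have hpow : ((N : ℂ) + 1) ^ (-(1 / l : ℂ)) = ((N : ℂ) + 1) ^ (-z) * ((N : ℂ) + 1) ^ (-w) := by
      rw [← cpow_add _ _ (Nat.cast_add_one_ne_zero N), ← neg_add, add_sub_cancel]
    rw [Finset.prod_mul_distrib, Finset.prod_mul_distrib, prod_one_add_inv_cpow, hpow,
      invGammaSeq, invGammaSeq]
    ring
  have hlim : (l : ℂ) ^ z * Gamma (1 / l) * (Gamma z)⁻¹ * (Gamma w)⁻¹ = 1 / degGamma l z := by
    rw [degGamma, cpow_neg]
    simp only [w, div_eq_mul_inv, mul_inv, inv_inv]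
    ring
  simp only [hsplit, ← hlim]
  exact (tendsto_const_nhds.mul (tendsto_invGammaSeq z)).mul (tendsto_invGammaSeq w)

theorem degGamma_weierstrass' (l : ℝ) (hl : l ∈ Set.Ioo (0 : ℝ) 1)
    (z : ℂ) (hz : 0 < z.re) (hz' : z.re < 1 / l) :
    Tendsto (fun N : ℕ =>
        (l : ℂ) ^ z * z * ((1 / l : ℂ) - z) * Complex.Gamma (1 / l) *
          ∏ n ∈ Finset.range N,
            (1 + 1 / ((n : ℂ) + 1)) ^ (-(1 / l : ℂ)) * (1 + z / (n + 1)) *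
              (1 + ((1 / l : ℂ) - z) / (n + 1)))
      atTop (nhds (1 / degGamma l z)) :=
  degGamma_weierstrass'_general l z
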